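/- arXiv:2309.01496 — 5 statements merged into one kernel-verified Lean document; each statement's English description precedes it below -/
import Mathlib

section
/- Let A be a real skew-symmetric 3×3 matrix and a, b, c ∈ ℝ. Suppose the quadratic form on ℝ³ × ℝ³ given by (v, x) ↦ a|v|² + 2b⟨v, x⟩ + c|x|² + 2⟨v, Ax⟩ is positive definite (i.e., it is strictly positive whenever (v, x) ≠ (0, 0)). Then a > 0, c > 0, ac − b² > 0, and the matrix Q := (ac − b²)I₃ + A² is positive definite; equivalently, (ac − b²)|x|² − |Ax|² > 0 for every nonzero x ∈ ℝ³. -/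
open Matrix RealInnerProductSpace

lemma skew_inner_self (A : Matrix (Fin 3) (Fin 3) ℝ) (hA : Aᵀ = -A)
    (x : EuclideanSpace ℝ (Fin 3)) : ⟪x, Matrix.toEuclideanLin A x⟫ = 0 := by
  have hAH : Aᴴ = -A := by
    rw [← hA]; ext i j
    simp [Matrix.conjTranspose_apply, Matrix.transpose_apply]
  have h1 : ⟪x, Matrix.toEuclideanLin A x⟫ = ⟪Matrix.toEuclideanLin Aᴴ x, x⟫ := by
    rw [Matrix.toEuclideanLin_conjTranspose_eq_adjoint]
    exact (LinearMap.adjoint_inner_left _ _ _).symm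
  rw [hAH, map_neg, LinearMap.neg_apply, inner_neg_left, real_inner_comm] at h1
  rw [real_inner_comm]
  linarith

/-- If the quadratic form
`(v, x) ↦ a|v|² + 2b⟨v,x⟩ + c|x|² + 2⟨v, Ax⟩` on `ℝ³ × ℝ³`, with `A` skew-symmetric,
is positive definite, then `a > 0`, `c > 0`, `ac − b² > 0` and the matrix
`Q = (ac − b²)I + A²` is positive definite, equivalently
`(ac − b²)|x|² − |Ax|² > 0` for every nonzero `x`. -/
theorem posdef_of_quadratic_form_posdef (A : Matrix (Fin 3) (Fin 3) ℝ) (hA : Aᵀ = -A)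
    (a b c : ℝ)
    (hpos : ∀ v x : EuclideanSpace ℝ (Fin 3), ¬(v = 0 ∧ x = 0) →
      0 < a * ‖v‖ ^ 2 + 2 * b * ⟪v, x⟫ + c * ‖x‖ ^ 2
        + 2 * ⟪v, Matrix.toEuclideanLin A x⟫) :
    0 < a ∧ 0 < c ∧ 0 < a * c - b ^ 2 ∧
      ∀ x : EuclideanSpace ℝ (Fin 3), x ≠ 0 →
        0 < (a * c - b ^ 2) * ‖x‖ ^ 2 - ‖Matrix.toEuclideanLin A x‖ ^ 2 := by
  set e : EuclideanSpace ℝ (Fin 3) := EuclideanSpace.single 0 1 with he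
  have hne : e ≠ 0 := by
    intro h
    have := congrFun (congrArg (WithLp.equiv 2 _) h) 0
    simp [he] at this
  have hnorme : ‖e‖ = 1 := by simp [he]
  have ha : 0 < a := by
    have := hpos e 0 (by simp [hne])
    simpa [hnorme] using this
  have hc : 0 < c := by
    have := hpos 0 e (by simp [hne])
    simpa [hnorme] using this
  have ha' : a ≠ 0 := ne_of_gt ha
  have key : ∀ x : EuclideanSpace ℝ (Fin 3), x ≠ 0 →
      0 < (a * c - b ^ 2) * ‖x‖ ^ 2 - ‖Matrix.toEuclideanLin A x‖ ^ 2 := by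
    intro x hx
    set Ax := Matrix.toEuclideanLin A x with hAx
    set w : EuclideanSpace ℝ (Fin 3) := b • x + Ax with hw
    have hskew : ⟪x, Ax⟫ = 0 := skew_inner_self A hA x
    have hwx : ⟪w, x⟫ = b * ‖x‖ ^ 2 := by
      rw [hw, inner_add_left, real_inner_smul_left, real_inner_self_eq_norm_sq,
        real_inner_comm, hskew]
      ring
    have hwAx : ⟪w, Ax⟫ = ‖Ax‖ ^ 2 := by
      rw [hw, inner_add_left, real_inner_smul_left, real_inner_self_eq_norm_sq, hskew]
      ring
    have hwn : ‖w‖ ^ 2 = b ^ 2 * ‖x‖ ^ 2 + ‖Ax‖ ^ 2 := by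
      have h := norm_add_sq_real (b • x) Ax
      rw [real_inner_smul_left, hskew, norm_smul] at h
      rw [← hw] at h
      rw [h, mul_pow]
      simp [Real.norm_eq_abs, sq_abs]
    set v : EuclideanSpace ℝ (Fin 3) := (-(1/a)) • w with hv
    have hvn : ‖v‖ ^ 2 = (1/a) ^ 2 * ‖w‖ ^ 2 := by
      rw [hv, norm_smul, mul_pow]
      simp [Real.norm_eq_abs, sq_abs]
    have hvx : ⟪v, x⟫ = -(1/a) * ⟪w, x⟫ := real_inner_smul_left _ _ _
    have hvAx : ⟪v, Ax⟫ = -(1/a) * ⟪w, Ax⟫ := real_inner_smul_left _ _ _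
    have H := hpos v x (by intro ⟨_, h⟩; exact hx h)
    rw [← hAx, hvn, hvx, hvAx, hwx, hwAx, hwn] at H
    have hgoal : (a * c - b ^ 2) * ‖x‖ ^ 2 - ‖Ax‖ ^ 2 =
        a * (a * ((1/a) ^ 2 * (b ^ 2 * ‖x‖ ^ 2 + ‖Ax‖ ^ 2))
          + 2 * b * (-(1/a) * (b * ‖x‖ ^ 2)) + c * ‖x‖ ^ 2
          + 2 * (-(1/a) * ‖Ax‖ ^ 2)) := by
      field_simp
      ring
    rw [hgoal]
    exact mul_pos ha H
  refine ⟨ha, hc, ?_, key⟩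
  have h := key e hne
  have hAe : (0:ℝ) ≤ ‖Matrix.toEuclideanLin A e‖ ^ 2 := by positivity
  rw [hnorme] at h
  nlinarith [h]
end

section
/- Let P be a real symmetric 6×6 matrix, p ∈ ℝ⁶ and d ∈ ℝ. Suppose that the ℝ⁶-valued function z ↦ z · exp(−(1/2)(zᵀPz + p·z) + d) is integrable on ℝ⁶ and that ∫_{ℝ⁶} z exp(−(1/2)(zᵀPz + p·z) + d) dz = 0 (as a vector in ℝ⁶). Then p = 0. -/
open Matrix MeasureTheory

lemma aux_nonpos (t : ℝ) : t * (Real.exp (-(t / 2)) - Real.exp (t / 2)) ≤ 0 := by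
  rcases le_or_gt 0 t with h | h
  · apply mul_nonpos_iff.2 (Or.inl ⟨h, ?_⟩)
    simp only [sub_nonpos]
    exact Real.exp_le_exp.2 (by linarith)
  · apply mul_nonpos_iff.2 (Or.inr ⟨h.le, ?_⟩)
    simp only [sub_nonneg]
    exact Real.exp_le_exp.2 (by linarith)

lemma aux_eq_zero {t : ℝ} (h : t * (Real.exp (-(t / 2)) - Real.exp (t / 2)) = 0) :
    t = 0 := by
  by_contra ht
  rcases lt_or_gt_of_ne ht with h' | h'
  · have h2 : Real.exp (t / 2) < Real.exp (-(t / 2)) := Real.exp_lt_exp.2 (by linarith)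
    nlinarith
  · have h2 : Real.exp (-(t / 2)) < Real.exp (t / 2) := Real.exp_lt_exp.2 (by linarith)
    nlinarith

/-- Let `P` be a real symmetric `6 × 6` matrix, `p ∈ ℝ⁶`, `d ∈ ℝ`.
If `z ↦ z · exp(−½(zᵀPz + p·z) + d)` is (Bochner) integrable on `ℝ⁶` and its integral
vanishes, then `p = 0`. -/
theorem centered_gaussian_mean_zero (P : Matrix (Fin 6) (Fin 6) ℝ) (hP : P.IsSymm)
    (p : Fin 6 → ℝ) (d : ℝ)
    (hint : Integrable (fun z : Fin 6 → ℝ =>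
      Real.exp (-(1 / 2 : ℝ) * (z ⬝ᵥ P.mulVec z + p ⬝ᵥ z) + d) • z))
    (hzero : ∫ z : Fin 6 → ℝ,
      Real.exp (-(1 / 2 : ℝ) * (z ⬝ᵥ P.mulVec z + p ⬝ᵥ z) + d) • z = 0) :
    p = 0 := by
  by_contra hp
  -- the linear functional `z ↦ p ⬝ᵥ z`
  set Lm : (Fin 6 → ℝ) →ₗ[ℝ] ℝ :=
    { toFun := fun z => p ⬝ᵥ z
      map_add' := fun x y => dotProduct_add p x y
      map_smul' := fun c x => by simp [dotProduct_smul, smul_eq_mul] } with hLm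
  let L : (Fin 6 → ℝ) →L[ℝ] ℝ := LinearMap.toContinuousLinearMap Lm
  have hLz : ∀ w : Fin 6 → ℝ, L w = p ⬝ᵥ w := fun _ => rfl
  set f : (Fin 6 → ℝ) → (Fin 6 → ℝ) := fun z =>
    Real.exp (-(1 / 2 : ℝ) * (z ⬝ᵥ P.mulVec z + p ⬝ᵥ z) + d) • z with hf
  have hF : Integrable (fun z => L (f z)) := L.integrable_comp hint
  have hFint : ∫ z, L (f z) = 0 := by
    rw [L.integral_comp_comm hint, hzero, map_zero]
  have hneg : MeasurePreserving (fun z : Fin 6 → ℝ => -z) volume volume :=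
    Measure.measurePreserving_neg _
  have hemb : MeasurableEmbedding (fun z : Fin 6 → ℝ => -z) :=
    (MeasurableEquiv.neg (Fin 6 → ℝ)).measurableEmbedding
  have hFneg : Integrable (fun z => L (f (-z))) :=
    (hneg.integrable_comp_emb hemb).2 hF
  have hFnegint : ∫ z, L (f (-z)) = 0 := by
    rw [hneg.integral_comp hemb (fun z => L (f z))]; exact hFint
  -- the pointwise formula
  have hQ : ∀ z : Fin 6 → ℝ, (-z) ⬝ᵥ P.mulVec (-z) = z ⬝ᵥ P.mulVec z := by
    intro z; simp [Matrix.mulVec_neg]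
  have key : ∀ z : Fin 6 → ℝ,
      L (f z) + L (f (-z)) =
        Real.exp (-(1 / 2 : ℝ) * (z ⬝ᵥ P.mulVec z) + d) *
          ((p ⬝ᵥ z) * (Real.exp (-(p ⬝ᵥ z / 2)) - Real.exp (p ⬝ᵥ z / 2))) := by
    intro z
    have h1 : L (f z) = Real.exp (-(1 / 2 : ℝ) * (z ⬝ᵥ P.mulVec z + p ⬝ᵥ z) + d)
        * (p ⬝ᵥ z) := by
      have e : f z = Real.exp (-(1 / 2 : ℝ) * (z ⬝ᵥ P.mulVec z + p ⬝ᵥ z) + d) • z := rfl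
      rw [e, L.map_smul, smul_eq_mul, hLz]
    have h2 : L (f (-z)) = Real.exp (-(1 / 2 : ℝ) * (z ⬝ᵥ P.mulVec z - p ⬝ᵥ z) + d)
        * (-(p ⬝ᵥ z)) := by
      have e : f (-z) =
          Real.exp (-(1 / 2 : ℝ) * (z ⬝ᵥ P.mulVec z - p ⬝ᵥ z) + d) • (-z) := by
        show Real.exp (-(1 / 2 : ℝ) * ((-z) ⬝ᵥ P.mulVec (-z) + p ⬝ᵥ (-z)) + d) • (-z) = _
        rw [hQ z, dotProduct_neg]
        ring_nf
      rw [e, L.map_smul, smul_eq_mul, hLz, dotProduct_neg]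
    rw [h1, h2]
    have e1 : -(1 / 2 : ℝ) * (z ⬝ᵥ P.mulVec z + p ⬝ᵥ z) + d =
        (-(1 / 2 : ℝ) * (z ⬝ᵥ P.mulVec z) + d) + (-(p ⬝ᵥ z / 2)) := by ring
    have e2 : -(1 / 2 : ℝ) * (z ⬝ᵥ P.mulVec z - p ⬝ᵥ z) + d =
        (-(1 / 2 : ℝ) * (z ⬝ᵥ P.mulVec z) + d) + (p ⬝ᵥ z / 2) := by ring
    rw [e1, e2]
    simp only [Real.exp_add]
    ring
  -- the nonnegative function with zero integral
  have hG : Integrable (fun z => -(L (f z) + L (f (-z)))) := (hF.add hFneg).neg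
  have hGnonneg : 0 ≤ᵐ[volume] fun z => -(L (f z) + L (f (-z)))  := by
    filter_upwards with z
    rw [Pi.zero_apply, key z, neg_nonneg]
    exact mul_nonpos_iff.2 (Or.inl ⟨(Real.exp_pos _).le, aux_nonpos _⟩)
  have hGzero : ∫ z, -(L (f z) + L (f (-z))) = 0 := by
    rw [integral_neg, integral_add hF hFneg, hFint, hFnegint]; simp
  have hae : ∀ᵐ z : Fin 6 → ℝ, p ⬝ᵥ z = 0 := by
    have h0 := (integral_eq_zero_iff_of_nonneg_ae hGnonneg hG).1 hGzero
    filter_upwards [h0] with z hz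
    have hz1 : L (f z) + L (f (-z)) = 0 := by
      have : -(L (f z) + L (f (-z))) = 0 := hz
      linarith
    have hz2 : Real.exp (-(1 / 2 : ℝ) * (z ⬝ᵥ P.mulVec z) + d) *
        ((p ⬝ᵥ z) * (Real.exp (-(p ⬝ᵥ z / 2)) - Real.exp (p ⬝ᵥ z / 2))) = 0 :=
      (key z).symm.trans hz1
    have hE : Real.exp (-(1 / 2 : ℝ) * (z ⬝ᵥ P.mulVec z) + d) ≠ 0 :=
      (Real.exp_pos _).ne'
    rcases mul_eq_zero.1 hz2 with h | h
    · exact absurd h hE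
    · exact aux_eq_zero h
  -- measure-theoretic conclusion
  have hKne : LinearMap.ker Lm ≠ ⊤ := by
    intro htop
    have hpker : p ∈ LinearMap.ker Lm := htop ▸ Submodule.mem_top
    have : p ⬝ᵥ p = 0 := hpker
    exact hp ((dotProduct_self_eq_zero).1 this)
  have hker0 : volume (LinearMap.ker Lm : Set (Fin 6 → ℝ)) = 0 :=
    Measure.addHaar_submodule volume _ hKne
  have hS0 : volume {z : Fin 6 → ℝ | p ⬝ᵥ z = 0} = 0 := by
    have hset : {z : Fin 6 → ℝ | p ⬝ᵥ z = 0} = (LinearMap.ker Lm : Set (Fin 6 → ℝ)) := by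
      ext z; simp [LinearMap.mem_ker, hLm]
    rw [hset]; exact hker0
  have hcompl : volume {z : Fin 6 → ℝ | p ⬝ᵥ z = 0}ᶜ = 0 := by
    rw [Set.compl_setOf]
    simpa [ae_iff] using hae
  have huniv : (volume : Measure (Fin 6 → ℝ)) Set.univ = 0 := by
    have hle := measure_union_le (μ := volume)
      {z : Fin 6 → ℝ | p ⬝ᵥ z = 0} {z : Fin 6 → ℝ | p ⬝ᵥ z = 0}ᶜ
    rw [Set.union_compl_self] at hle
    simpa [hS0, hcompl] using hle
  exact (isOpen_univ.measure_pos (volume : Measure (Fin 6 → ℝ)) Set.univ_nonempty).ne' huniv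
end

section
/- For every δ > 0 there exists a constant C(δ) > 0 such that for all natural numbers a₁, a₂, a, b with a₁ + a₂ = a, 2a₁ ≤ a and b ≤ 4, one has binom(a, a₁) · (a!)^{−(1+δ)} ≤ C(δ) · (a₁ + 1)^{−7/2} · ((a₁ + b)!)^{−(1+δ)} · (a₂!)^{−(1+δ)}. -/
open Real Filter

lemma two_pow_le_centralBinom (n : ℕ) : 2 ^ n ≤ n.centralBinom := by
  induction n with
  | zero => simp [Nat.centralBinom]
  | succ n ih =>
    have h := Nat.succ_mul_centralBinom_succ n
    have h2 : (n + 1) * 2 ^ (n + 1) ≤ (n + 1) * (n + 1).centralBinom := by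
      rw [h, pow_succ]
      nlinarith [Nat.centralBinom_pos n, ih]
    exact Nat.le_of_mul_le_mul_left h2 (Nat.succ_pos n)

lemma poly_le_exp_bound (r : ℝ) (hr : 1 < r) (k : ℕ) :
    ∃ C : ℝ, 1 ≤ C ∧ ∀ n : ℕ, ((n : ℝ) + 4) ^ k ≤ C * r ^ n := by
  have hg : Tendsto (fun m : ℕ => (m : ℝ) ^ k / r ^ m) atTop (nhds 0) :=
    tendsto_pow_const_div_const_pow_of_one_lt k hr
  have hcomp : Tendsto (fun n : ℕ => ((n + 4 : ℕ) : ℝ) ^ k / r ^ (n + 4)) atTop (nhds 0) :=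
    hg.comp (tendsto_add_atTop_nat 4)
  have hf : Tendsto (fun n : ℕ => (((n : ℝ) + 4) ^ k / r ^ n)) atTop (nhds 0) := by
    have h := hcomp.mul_const (r ^ 4)
    rw [zero_mul] at h
    refine h.congr fun n => ?_
    have hrpos : (0:ℝ) < r := lt_trans one_pos hr
    push_cast
    rw [pow_add]
    field_simp
  obtain ⟨C₀, hC₀⟩ := hf.bddAbove_range
  refine ⟨max C₀ 1, le_max_right _ _, fun n => ?_⟩
  have h1 : ((n : ℝ) + 4) ^ k / r ^ n ≤ C₀ := hC₀ (Set.mem_range_self n)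
  have hrn : (0:ℝ) < r ^ n := pow_pos (lt_trans one_pos hr) n
  calc ((n : ℝ) + 4) ^ k ≤ C₀ * r ^ n := by
        rw [div_le_iff₀ hrn] at h1; linarith
    _ ≤ max C₀ 1 * r ^ n :=
        mul_le_mul_of_nonneg_right (le_max_left _ _) hrn.le

/-- For every `δ > 0` there is `C(δ) > 0` such that for all naturals
`a₁, a₂, a, b` with `a₁ + a₂ = a`, `2a₁ ≤ a`, `b ≤ 4`:
`C(a, a₁) (a!)^{−(1+δ)} ≤ C(δ) (a₁+1)^{−7/2} ((a₁+b)!)^{−(1+δ)} (a₂!)^{−(1+δ)}`. -/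
theorem binom_factorial_estimate (δ : ℝ) (hδ : 0 < δ) :
    ∃ C : ℝ, 0 < C ∧ ∀ a₁ a₂ a b : ℕ, a₁ + a₂ = a → 2 * a₁ ≤ a → b ≤ 4 →
      (a.choose a₁ : ℝ) * (a.factorial : ℝ) ^ (-(1 + δ))
        ≤ C * ((a₁ : ℝ) + 1) ^ (-(7 / 2 : ℝ))
          * ((a₁ + b).factorial : ℝ) ^ (-(1 + δ))
          * (a₂.factorial : ℝ) ^ (-(1 + δ)) := by
  have hr : (1:ℝ) < 2 ^ δ :=
    Real.one_lt_rpow_iff_of_pos (by norm_num) |>.mpr (Or.inl ⟨by norm_num, hδ⟩)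
  set k : ℕ := ⌈8 + 4 * δ⌉₊ with hk
  obtain ⟨C, hC1, hC⟩ := poly_le_exp_bound ((2:ℝ) ^ δ) hr k
  refine ⟨C, lt_of_lt_of_le one_pos hC1, fun a₁ a₂ a b hsum h2a hb => ?_⟩
  have ha₁a : a₁ ≤ a := by omega
  set A : ℝ := (a.factorial : ℝ) with hA
  set F1 : ℝ := (a₁.factorial : ℝ) with hF1
  set F2 : ℝ := (a₂.factorial : ℝ) with hF2
  set Fb : ℝ := ((a₁ + b).factorial : ℝ) with hFb
  have hApos : 0 < A := by rw [hA]; exact_mod_cast a.factorial_pos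
  have hF1pos : 0 < F1 := by rw [hF1]; exact_mod_cast a₁.factorial_pos
  have hF2pos : 0 < F2 := by rw [hF2]; exact_mod_cast a₂.factorial_pos
  have hFbpos : 0 < Fb := by rw [hFb]; exact_mod_cast (a₁ + b).factorial_pos
  have hP4pos : (0:ℝ) < (a₁ : ℝ) + 4 := by positivity
  have h1δ : (0:ℝ) ≤ 1 + δ := by linarith
  -- nat facts
  have hnat1 : (a₁ + b).factorial ≤ a₁.factorial * (a₁ + 4) ^ 4 := by
    have hle : (a₁ + b).factorial ≤ (a₁ + 4).factorial :=
      Nat.factorial_le (by omega)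
    have e : (a₁ + 4).factorial = (a₁+4)*((a₁+3)*((a₁+2)*((a₁+1)*a₁.factorial))) := rfl
    have hp : (a₁ + 4).factorial ≤ a₁.factorial * (a₁+4)^4 := by
      rw [e, show a₁.factorial * (a₁+4)^4 = (a₁+4)*((a₁+4)*((a₁+4)*((a₁+4)*a₁.factorial))) by ring]
      gcongr <;> omega
    exact le_trans hle hp
  have hnat2 : 2 ^ a₁ * a₁.factorial * a₂.factorial ≤ a.factorial := by
    have hc : 2 ^ a₁ ≤ a.choose a₁ := by
      refine le_trans (two_pow_le_centralBinom a₁) ?_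
      exact Nat.choose_le_choose a₁ h2a
    calc 2 ^ a₁ * a₁.factorial * a₂.factorial
        ≤ a.choose a₁ * a₁.factorial * a₂.factorial := by
          exact Nat.mul_le_mul_right _ (Nat.mul_le_mul_right _ hc)
      _ = a.factorial := by
          have := Nat.choose_mul_factorial_mul_factorial ha₁a
          rw [show a - a₁ = a₂ by omega] at this
          exact this
  -- real versions
  have h1 : Fb ≤ F1 * ((a₁:ℝ) + 4) ^ (4:ℝ) := by
    rw [show ((4:ℝ)) = ((4:ℕ):ℝ) by norm_num, Real.rpow_natCast]
    rw [hFb, hF1]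
    exact_mod_cast hnat1
  have h2 : (2:ℝ) ^ a₁ * F1 * F2 ≤ A := by
    rw [hA, hF1, hF2]
    exact_mod_cast hnat2
  have hxA : (a.choose a₁ : ℝ) * F1 * F2 = A := by
    rw [hA, hF1, hF2]
    have := Nat.choose_mul_factorial_mul_factorial ha₁a
    rw [show a - a₁ = a₂ by omega] at this
    exact_mod_cast this
  have e1 : ((a₁:ℝ) + 1) ^ ((7:ℝ)/2) ≤ ((a₁:ℝ) + 4) ^ (4:ℝ) := by
    calc ((a₁:ℝ) + 1) ^ ((7:ℝ)/2) ≤ ((a₁:ℝ) + 4) ^ ((7:ℝ)/2) :=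
          Real.rpow_le_rpow (by positivity) (by linarith) (by norm_num)
      _ ≤ ((a₁:ℝ) + 4) ^ (4:ℝ) :=
          Real.rpow_le_rpow_of_exponent_le
            (by have h := Nat.cast_nonneg (α := ℝ) a₁; linarith) (by norm_num)
  have one_le_P4 : (1:ℝ) ≤ (a₁:ℝ) + 4 := by
    have h := Nat.cast_nonneg (α := ℝ) a₁; linarith
  have e2 : Fb ^ (1 + δ) ≤ F1 ^ (1 + δ) * ((a₁:ℝ) + 4) ^ (4 * (1 + δ)) := by
    calc Fb ^ (1 + δ) ≤ (F1 * ((a₁:ℝ) + 4) ^ (4:ℝ)) ^ (1 + δ) :=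
          Real.rpow_le_rpow hFbpos.le h1 h1δ
      _ = F1 ^ (1 + δ) * (((a₁:ℝ) + 4) ^ (4:ℝ)) ^ (1 + δ) :=
          Real.mul_rpow hF1pos.le (by positivity)
      _ = F1 ^ (1 + δ) * ((a₁:ℝ) + 4) ^ (4 * (1 + δ)) := by
          rw [← Real.rpow_mul hP4pos.le]
  have e3 : ((a₁:ℝ) + 4) ^ (4:ℝ) * ((a₁:ℝ) + 4) ^ (4 * (1 + δ)) ≤ C * ((2:ℝ) ^ δ) ^ a₁ := by
    rw [← Real.rpow_add hP4pos]
    calc ((a₁:ℝ) + 4) ^ (4 + 4 * (1 + δ)) ≤ ((a₁:ℝ) + 4) ^ ((k:ℕ):ℝ) := by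
          apply Real.rpow_le_rpow_of_exponent_le one_le_P4
          have h := Nat.le_ceil (8 + 4 * δ)
          rw [← hk] at h
          linarith
      _ = ((a₁:ℝ) + 4) ^ k := Real.rpow_natCast _ _
      _ ≤ C * ((2:ℝ) ^ δ) ^ a₁ := hC a₁
  have e4 : ((2:ℝ) ^ δ) ^ a₁ * F1 ^ δ * F2 ^ δ ≤ A ^ δ := by
    have hh : ((2:ℝ) ^ δ) ^ a₁ * F1 ^ δ * F2 ^ δ = ((2:ℝ) ^ a₁ * F1 * F2) ^ δ := by
      rw [Real.mul_rpow (by positivity) hF2pos.le, Real.mul_rpow (by positivity) hF1pos.le]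
      rw [← Real.rpow_natCast ((2:ℝ) ^ δ) a₁, ← Real.rpow_natCast (2:ℝ) a₁,
        ← Real.rpow_mul (by norm_num : (0:ℝ) ≤ 2), ← Real.rpow_mul (by norm_num : (0:ℝ) ≤ 2),
        mul_comm δ ((a₁:ℝ))]
    rw [hh]
    exact Real.rpow_le_rpow (by positivity) h2 hδ.le
  have key : (a.choose a₁ : ℝ) * (((a₁:ℝ) + 1) ^ ((7:ℝ)/2) * Fb ^ (1 + δ) * F2 ^ (1 + δ))
      ≤ C * A ^ (1 + δ) := by
    have hch : (0:ℝ) ≤ (a.choose a₁ : ℝ) := Nat.cast_nonneg _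
    calc (a.choose a₁ : ℝ) * (((a₁:ℝ) + 1) ^ ((7:ℝ)/2) * Fb ^ (1 + δ) * F2 ^ (1 + δ))
        ≤ (a.choose a₁ : ℝ) * (((a₁:ℝ) + 4) ^ (4:ℝ)
            * (F1 ^ (1 + δ) * ((a₁:ℝ) + 4) ^ (4 * (1 + δ))) * F2 ^ (1 + δ)) := by
          apply mul_le_mul_of_nonneg_left _ hch
          apply mul_le_mul_of_nonneg_right _ (by positivity)
          exact mul_le_mul e1 e2 (by positivity) (by positivity)
      _ = ((a.choose a₁ : ℝ) * F1 * F2)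
            * (F1 ^ δ * F2 ^ δ * (((a₁:ℝ) + 4) ^ (4:ℝ) * ((a₁:ℝ) + 4) ^ (4 * (1 + δ)))) := by
          rw [Real.rpow_add hF1pos, Real.rpow_add hF2pos, Real.rpow_one, Real.rpow_one]
          ring
      _ ≤ A * (F1 ^ δ * F2 ^ δ * (C * ((2:ℝ) ^ δ) ^ a₁)) := by
          rw [hxA]
          apply mul_le_mul_of_nonneg_left _ hApos.le
          exact mul_le_mul_of_nonneg_left e3 (by positivity)
      _ = C * (A * (((2:ℝ) ^ δ) ^ a₁ * F1 ^ δ * F2 ^ δ)) := by ring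
      _ ≤ C * (A * A ^ δ) := by
          apply mul_le_mul_of_nonneg_left _ (by linarith)
          exact mul_le_mul_of_nonneg_left e4 hApos.le
      _ = C * A ^ (1 + δ) := by rw [Real.rpow_add hApos, Real.rpow_one]
  -- reduce the goal to `key`
  rw [Real.rpow_neg hApos.le, Real.rpow_neg (by positivity : (0:ℝ) ≤ (a₁:ℝ) + 1),
    Real.rpow_neg hFbpos.le, Real.rpow_neg hF2pos.le, ← div_eq_mul_inv]
  rw [show C * (((a₁:ℝ) + 1) ^ ((7:ℝ)/2))⁻¹ * (Fb ^ (1 + δ))⁻¹ * (F2 ^ (1 + δ))⁻¹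
      = C / (((a₁:ℝ) + 1) ^ ((7:ℝ)/2) * Fb ^ (1 + δ) * F2 ^ (1 + δ)) by
    field_simp]
  rw [div_le_div_iff₀ (by positivity) (by positivity)]
  exact key
end

section
/- Let v, v_* ∈ ℝ³ and let σ be a unit vector in ℝ³ with ⟨v − v_*, σ⟩ ≥ 0. Define v' := (v + v_*)/2 + (|v − v_*|/2)σ. Then |v − v_*| ≤ 6 ⟨v_*⟩ ⟨v'⟩, where ⟨w⟩ := (1 + |w|²)^{1/2}. -/
open RealInnerProductSpace

/-- For `v, v_* ∈ ℝ³` and a unit vector `σ` with `⟨v − v_*, σ⟩ ≥ 0`,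
setting `v' := (v + v_*)/2 + (|v − v_*|/2)σ`, one has `|v − v_*| ≤ 6⟨v_*⟩⟨v'⟩`,
where `⟨w⟩ = (1 + |w|²)^{1/2}`. -/
theorem dist_le_brackets (v vs σ : EuclideanSpace ℝ (Fin 3)) (hσ : ‖σ‖ = 1)
    (hang : 0 ≤ ⟪v - vs, σ⟫) :
    ‖v - vs‖ ≤ 6 * Real.sqrt (1 + ‖vs‖ ^ 2)
      * Real.sqrt (1 + ‖(1 / 2 : ℝ) • (v + vs) + (‖v - vs‖ / 2) • σ‖ ^ 2) := by
  set w := (1 / 2 : ℝ) • (v + vs) + (‖v - vs‖ / 2) • σ with hw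
  have key : ‖v - vs‖ ^ 2 ≤ 2 * ‖w - vs‖ ^ 2 := by
    have h1 : w - vs = (1/2:ℝ) • (v - vs) + (‖v - vs‖/2) • σ := by
      rw [hw]; module
    rw [h1, norm_add_sq_real, norm_smul, norm_smul, real_inner_smul_left,
      real_inner_smul_right, hσ]
    have hr : 0 ≤ ‖v - vs‖ := norm_nonneg _
    have h2 := mul_nonneg hr hang
    simp only [Real.norm_eq_abs]
    rw [abs_of_nonneg (by norm_num : (0:ℝ) ≤ 1/2), abs_of_nonneg (by positivity : (0:ℝ) ≤ ‖v - vs‖/2)]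
    nlinarith
  set A := Real.sqrt (1 + ‖vs‖ ^ 2) with hA
  set B := Real.sqrt (1 + ‖w‖ ^ 2) with hB
  have hA1 : 1 ≤ A := Real.one_le_sqrt.mpr (by nlinarith [sq_nonneg ‖vs‖])
  have hB1 : 1 ≤ B := Real.one_le_sqrt.mpr (by nlinarith [sq_nonneg ‖w‖])
  have hAv : ‖vs‖ ≤ A := by
    rw [hA]
    exact (Real.le_sqrt (norm_nonneg _) (by positivity)).mpr (by nlinarith)
  have hBw : ‖w‖ ≤ B := by
    rw [hB]
    exact (Real.le_sqrt (norm_nonneg _) (by positivity)).mpr (by nlinarith)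
  have htri : ‖w - vs‖ ≤ ‖w‖ + ‖vs‖ := norm_sub_le _ _
  have h0 : 0 ≤ ‖w - vs‖ := norm_nonneg _
  have h0' : 0 ≤ ‖v - vs‖ := norm_nonneg _
  have hApos : (0:ℝ) < A := lt_of_lt_of_le one_pos hA1
  have hBpos : (0:ℝ) < B := lt_of_lt_of_le one_pos hB1
  have hsum : A + B ≤ 2 * A * B := by nlinarith
  have h3 : ‖v - vs‖ ^ 2 ≤ 2 * (A + B) ^ 2 := by nlinarith
  have h8 : ‖v - vs‖ ^ 2 ≤ (6 * A * B) ^ 2 := by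
    nlinarith [mul_le_mul hsum hsum (by positivity : (0:ℝ) ≤ A + B) (by positivity : (0:ℝ) ≤ 2 * A * B)]
  exact (pow_le_pow_iff_left₀ h0' (by positivity) two_ne_zero).mp h8
end

section
/- Let s ∈ (0, 1), 𝒦 ∈ (0, 1], and let b : [−1, 1] → [0, ∞) be measurable with 𝒦 θ^{−1−2s} ≤ sin θ · b(cos θ) ≤ 𝒦^{−1} θ^{−1−2s} for all θ ∈ (0, π/2]. Fix a unit vector u ∈ ℝ³ and for σ on the unit sphere S² let θ(σ) := arccos(u·σ). Then there exists a constant C(𝒦, s) > 0 such that for all real numbers a > 0 and r > 0: ∫_{S²} b(cos θ(σ)) 1_{θ(σ) ≤ π/2} 1_{sin(θ(σ)/2) > a/r} dσ ≤ C(𝒦, s) a^{−2s} r^{2s}. -/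
open MeasureTheory Real RealInnerProductSpace
open scoped Pointwise

/-- The surface measure on the unit sphere `S² ⊂ ℝ³`. -/
noncomputable def sphereMeasure :
    Measure (Metric.sphere (0 : EuclideanSpace ℝ (Fin 3)) 1) :=
  (volume : Measure (EuclideanSpace ℝ (Fin 3))).toSphere

/-!
Jordan's inequality `2θ/π ≤ sin θ` turns the upper bound on `sin θ · b(cos θ)` into
`b(cos θ) ≲ θ^(-2-2s)`, and `a/r < sin(θ/2) ≤ θ/2` forces `θ > t₀ := 2a/r`. After a reflection
taking `u` to the first basis vector, the cone over the spherical cap `{θ ≤ t}` lies in the box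
`[-1,1] × [-t,t]²`, so the cap has measure `≤ 24 t²`. Summing `θ^(-2-2s)` over the dyadic
shells `2^k t₀ < θ ≤ 2^(k+1) t₀` gives a geometric series in `2^(-2s)`, hence a bound
`≲ t₀^(-2s) = 2^(-2s) a^(-2s) r^(2s)`.
-/

theorem volume_setOf_forall_abs_apply_le {ι : Type*} [Fintype ι] (M : ι → ℝ) :
    volume {x : EuclideanSpace ℝ ι | ∀ i, |x i| ≤ M i} = ∏ i, ENNReal.ofReal (2 * M i) := by
  have hbox : {x : EuclideanSpace ℝ ι | ∀ i, |x i| ≤ M i} =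
      (MeasurableEquiv.toLp 2 (ι → ℝ)).symm ⁻¹' Set.univ.pi fun i => Set.Icc (-M i) (M i) := by
    ext x
    simp only [Set.mem_ofPred_eq, Set.mem_preimage, Set.mem_univ_pi, Set.mem_Icc, abs_le]
    rfl
  rw [hbox, (EuclideanSpace.volume_preserving_symm_measurableEquiv_toLp ι).measure_preimage
    (MeasurableSet.univ_pi fun _ => measurableSet_Icc).nullMeasurableSet, volume_pi_pi]
  simp_rw [Real.volume_Icc, sub_neg_eq_add, two_mul]

theorem abs_apply_succ_le_of_arccos_apply_zero_le {n : ℕ} {w : EuclideanSpace ℝ (Fin (n + 1))}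
    (hw : ‖w‖ = 1) {t : ℝ} (h : arccos (w 0) ≤ t) (j : Fin n) : |w j.succ| ≤ t := by
  have hsq : w j.succ ^ 2 ≤ 1 - w 0 ^ 2 := by
    have hnorm := EuclideanSpace.norm_sq_eq w
    simp only [hw, Real.norm_eq_abs, sq_abs, Fin.sum_univ_succ, one_pow] at hnorm
    have := Finset.single_le_sum (f := fun i : Fin n => w i.succ ^ 2)
      (fun i _ => sq_nonneg _) (Finset.mem_univ j)
    linarith
  calc |w j.succ| ≤ √(1 - w 0 ^ 2) := Real.abs_le_sqrt hsq
    _ = sin (arccos (w 0)) := (sin_arccos _).symm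
    _ ≤ arccos (w 0) := sin_le (arccos_nonneg _)
    _ ≤ t := h

theorem smul_image_setOf_arccos_inner_le_subset {n : ℕ} {u : EuclideanSpace ℝ (Fin (n + 1))}
    (hu : ‖u‖ = 1) (t : ℝ) :
    Set.Ioo (0 : ℝ) 1 • ((↑) '' {σ : Metric.sphere (0 : EuclideanSpace ℝ (Fin (n + 1))) 1 |
        arccos ⟪u, (σ : EuclideanSpace ℝ (Fin (n + 1)))⟫ ≤ t}) ⊆
      Submodule.reflection (ℝ ∙ (u - EuclideanSpace.single 0 1))ᗮ ⁻¹'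
        {x | ∀ i, |x i| ≤ (Fin.cons 1 fun _ => t : Fin (n + 1) → ℝ) i} := by
  rintro _ ⟨c, hc, _, ⟨σ, hσ, rfl⟩, rfl⟩
  set f := Submodule.reflection (ℝ ∙ (u - EuclideanSpace.single 0 1))ᗮ
  have hfu : f u = EuclideanSpace.single 0 1 := Submodule.reflection_sub (by simp [hu])
  have hfσ : ‖f σ‖ = 1 := by simp
  have hfσ0 : (f σ) 0 = ⟪u, (σ : EuclideanSpace ℝ (Fin (n + 1)))⟫ := by
    rw [← f.inner_map_map, hfu, EuclideanSpace.inner_single_left]; simp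
  have hc1 : |c| ≤ 1 := abs_le.2 ⟨by linarith [hc.1], hc.2.le⟩
  intro i
  rw [f.map_smul, PiLp.smul_apply, smul_eq_mul, abs_mul]
  refine le_trans (mul_le_of_le_one_left (abs_nonneg _) hc1) ?_
  cases i using Fin.cases with
  | zero => simpa [hfσ] using PiLp.norm_apply_le (f σ) 0
  | succ j => exact abs_apply_succ_le_of_arccos_apply_zero_le hfσ (hfσ0 ▸ hσ) j

theorem toSphere_setOf_arccos_inner_le {n : ℕ} {u : EuclideanSpace ℝ (Fin (n + 1))}
    (hu : ‖u‖ = 1) {t : ℝ} (ht : 0 ≤ t) :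
    (volume : Measure (EuclideanSpace ℝ (Fin (n + 1)))).toSphere
        {σ | arccos ⟪u, (σ : EuclideanSpace ℝ (Fin (n + 1)))⟫ ≤ t} ≤
      ENNReal.ofReal ((n + 1) * (2 * (2 * t) ^ n)) := by
  have hmeas : MeasurableSet {σ : Metric.sphere (0 : EuclideanSpace ℝ (Fin (n + 1))) 1 |
      arccos ⟪u, (σ : EuclideanSpace ℝ (Fin (n + 1)))⟫ ≤ t} :=
    measurableSet_le (by fun_prop) measurable_const
  rw [Measure.toSphere_apply' _ hmeas, finrank_euclideanSpace_fin]
  calc ((n + 1 : ℕ) : ENNReal) * volume _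
      ≤ (n + 1 : ℕ) * volume
          (Submodule.reflection (ℝ ∙ (u - EuclideanSpace.single 0 1))ᗮ ⁻¹'
            {x | ∀ i, |x i| ≤ (Fin.cons 1 fun _ => t : Fin (n + 1) → ℝ) i}) := by
        gcongr
        exact smul_image_setOf_arccos_inner_le_subset hu t
    _ = ENNReal.ofReal ((n + 1) * (2 * (2 * t) ^ n)) := by
        rw [(LinearIsometryEquiv.measurePreserving _).measure_preimage (by measurability),
          volume_setOf_forall_abs_apply_le, Fin.prod_univ_succ]
        simp only [Fin.cons_zero, Fin.cons_succ, Finset.prod_const, Finset.card_univ,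
          Fintype.card_fin]
        rw [← ENNReal.ofReal_pow (by positivity), ← ENNReal.ofReal_mul (by norm_num),
          ← ENNReal.ofReal_natCast, ← ENNReal.ofReal_mul (by positivity)]
        push_cast
        ring_nf

theorem sphereMeasure_setOf_arccos_inner_le {u : EuclideanSpace ℝ (Fin 3)} (hu : ‖u‖ = 1)
    {t : ℝ} (ht : 0 ≤ t) :
    sphereMeasure {σ | arccos ⟪u, (σ : EuclideanSpace ℝ (Fin 3))⟫ ≤ t} ≤
      ENNReal.ofReal (24 * t ^ (2 : ℝ)) := by
  refine (toSphere_setOf_arccos_inner_le (n := 2) hu ht).trans_eq ?_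
  rw [rpow_two]
  congr 1
  push_cast
  ring

theorem two_pow_mul_rpow_neg_mul_two_pow_succ_mul_rpow {t₀ : ℝ} (ht₀ : 0 < t₀) (d p : ℝ) (k : ℕ) :
    ((2 : ℝ) ^ k * t₀) ^ (-p) * ((2 : ℝ) ^ (k + 1) * t₀) ^ d =
      2 ^ d * t₀ ^ (d - p) * ((2 : ℝ) ^ (d - p)) ^ k := by
  have hx : 0 < (2 : ℝ) ^ k * t₀ := by positivity
  rw [pow_succ, mul_right_comm, mul_rpow hx.le zero_le_two, ← mul_assoc, mul_comm _ (2 ^ d),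
    mul_assoc, ← rpow_add hx, neg_add_eq_sub, mul_rpow (by positivity) ht₀.le,
    ← rpow_natCast, ← rpow_mul zero_le_two, ← rpow_natCast (2 ^ (d - p)),
    ← rpow_mul zero_le_two, mul_comm (k : ℝ)]
  ring

theorem lintegral_indicator_Ioi_rpow_neg_le {X : Type*} [MeasurableSpace X] {μ : Measure X}
    {g : X → ℝ} (hg : Measurable g) {A d p t₀ : ℝ} (hp : 0 ≤ p) (hdp : d < p) (ht₀ : 0 < t₀)
    (hμ : ∀ t, 0 < t → μ {x | g x ≤ t} ≤ ENNReal.ofReal (A * t ^ d)) :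
    ∫⁻ x, (Set.Ioi t₀).indicator (fun t => ENNReal.ofReal (t ^ (-p))) (g x) ∂μ ≤
      ENNReal.ofReal (A * 2 ^ d / (1 - 2 ^ (d - p)) * t₀ ^ (d - p)) := by
  set S : ℕ → Set X := fun k => {x | g x ≤ 2 ^ (k + 1) * t₀}
  set c : ℕ → ℝ := fun k => ((2 : ℝ) ^ k * t₀) ^ (-p)
  set ρ : ℝ := 2 ^ (d - p)
  have hρ0 : 0 ≤ ρ := by positivity
  have hρ1 : ρ < 1 := rpow_lt_one_of_one_lt_of_neg one_lt_two (by linarith)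
  have hdyadic : ∀ x, (Set.Ioi t₀).indicator (fun t => ENNReal.ofReal (t ^ (-p))) (g x) ≤
      ∑' k, (S k).indicator (fun _ => ENNReal.ofReal (c k)) x := by
    intro x
    by_cases hx : t₀ < g x
    · obtain ⟨k, hk, hk'⟩ := exists_nat_pow_near ((one_le_div ht₀).2 hx.le) one_lt_two
      rw [le_div_iff₀ ht₀] at hk
      rw [div_lt_iff₀ ht₀] at hk'
      refine le_trans ?_ (ENNReal.le_tsum k)
      rw [Set.indicator_of_mem (Set.mem_Ioi.2 hx),
        Set.indicator_of_mem (show x ∈ S k from hk'.le)]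
      exact ENNReal.ofReal_le_ofReal
        (rpow_le_rpow_of_nonpos (by positivity) hk (neg_nonpos.2 hp))
    · simp [hx]
  calc ∫⁻ x, (Set.Ioi t₀).indicator (fun t => ENNReal.ofReal (t ^ (-p))) (g x) ∂μ
      ≤ ∫⁻ x, ∑' k, (S k).indicator (fun _ => ENNReal.ofReal (c k)) x ∂μ :=
        lintegral_mono hdyadic
    _ = ∑' k, ∫⁻ x, (S k).indicator (fun _ => ENNReal.ofReal (c k)) x ∂μ :=
        lintegral_tsum fun k =>
          (measurable_const.indicator (measurableSet_le hg measurable_const)).aemeasurable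
    _ ≤ ∑' k, ENNReal.ofReal (c k) * ENNReal.ofReal (A * ((2 : ℝ) ^ (k + 1) * t₀) ^ d) :=
        ENNReal.tsum_le_tsum fun k => (lintegral_indicator_const_le _ _).trans
          (mul_le_mul_right (hμ _ (by positivity)) _)
    _ = ∑' k, ENNReal.ofReal (A * 2 ^ d * t₀ ^ (d - p)) * ENNReal.ofReal ρ ^ k := by
        refine tsum_congr fun k => ?_
        rw [← ENNReal.ofReal_mul (by positivity), ← ENNReal.ofReal_pow hρ0,
          ← ENNReal.ofReal_mul' (by positivity)]
        congr 1
        linear_combination A * two_pow_mul_rpow_neg_mul_two_pow_succ_mul_rpow ht₀ d p k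
    _ = ENNReal.ofReal (A * 2 ^ d / (1 - 2 ^ (d - p)) * t₀ ^ (d - p)) := by
        rw [ENNReal.tsum_mul_left, ENNReal.tsum_geometric, ← ENNReal.ofReal_one,
          ← ENNReal.ofReal_sub _ hρ0, ← ENNReal.ofReal_inv_of_pos (by linarith),
          ← ENNReal.ofReal_mul' (by simp [hρ1.le])]
        congr 1
        ring

theorem le_pi_div_two_mul_rpow_sub_one_of_sin_mul_le {θ x K e : ℝ} (hθ0 : 0 < θ)
    (hθ : θ ≤ π / 2) (hx : 0 ≤ x) (h : sin θ * x ≤ K * θ ^ e) : x ≤ π / 2 * K * θ ^ (e - 1) := by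
  have hjordan : 2 / π * θ * x ≤ K * θ ^ e :=
    (mul_le_mul_of_nonneg_right (mul_le_sin hθ0.le hθ) hx).trans h
  calc x = π / (2 * θ) * (2 / π * θ * x) := by field_simp
    _ ≤ π / (2 * θ) * (K * θ ^ e) := by gcongr
    _ = π / 2 * K * θ ^ (e - 1) := by rw [rpow_sub_one hθ0.ne']; field_simp

theorem ofReal_ite_le_indicator_Ioi {b : ℝ → ℝ} {K e q θ : ℝ} (hq : 0 ≤ q) (hθ : 0 ≤ θ)
    (hb_nonneg : ∀ x, 0 ≤ b x)
    (hb : ∀ φ, 0 < φ → φ ≤ π / 2 → sin φ * b (cos φ) ≤ K * φ ^ e) :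
    ENNReal.ofReal (if θ ≤ π / 2 ∧ q < sin (θ / 2) then b (cos θ) else 0) ≤
      ENNReal.ofReal (π / 2 * K) *
        (Set.Ioi (2 * q)).indicator (fun t => ENNReal.ofReal (t ^ (e - 1))) θ := by
  split_ifs with h
  · obtain ⟨hθπ, hqθ⟩ := h
    have h2q : 2 * q < θ := by linarith [sin_le (by linarith : 0 ≤ θ / 2)]
    rw [Set.indicator_of_mem (Set.mem_Ioi.2 h2q), ← ENNReal.ofReal_mul' (rpow_nonneg hθ _)]
    exact ENNReal.ofReal_le_ofReal (le_pi_div_two_mul_rpow_sub_one_of_sin_mul_le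
      (by linarith) hθπ (hb_nonneg _) (hb θ (by linarith) hθπ))
  · simp

theorem angular_integral_large_dev_general (s 𝒦 : ℝ) (hs : 0 < s)
    (hK : 0 < 𝒦) (b : ℝ → ℝ)
    (hb_nonneg : ∀ x, 0 ≤ b x)
    (hb : ∀ θ : ℝ, 0 < θ → θ ≤ π / 2 →
      𝒦 * θ ^ (-1 - 2 * s) ≤ Real.sin θ * b (Real.cos θ) ∧
      Real.sin θ * b (Real.cos θ) ≤ 𝒦⁻¹ * θ ^ (-1 - 2 * s))
    (u : EuclideanSpace ℝ (Fin 3)) (hu : ‖u‖ = 1) :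
    ∃ C : ℝ, 0 < C ∧ ∀ a r : ℝ, 0 < a → 0 < r →
      (∫⁻ σ : Metric.sphere (0 : EuclideanSpace ℝ (Fin 3)) 1,
          ENNReal.ofReal
            (if Real.arccos ⟪u, (σ : EuclideanSpace ℝ (Fin 3))⟫ ≤ π / 2 ∧
                a / r < Real.sin (Real.arccos ⟪u, (σ : EuclideanSpace ℝ (Fin 3))⟫ / 2)
              then
              b (Real.cos (Real.arccos ⟪u, (σ : EuclideanSpace ℝ (Fin 3))⟫))
            else 0) ∂sphereMeasure)
        ≤ ENNReal.ofReal (C * a ^ (-(2 * s)) * r ^ (2 * s)) := by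
  set θ : Metric.sphere (0 : EuclideanSpace ℝ (Fin 3)) 1 → ℝ := fun σ => arccos ⟪u, (σ : _)⟫
  have hρ : 0 < 1 - (2 : ℝ) ^ (-(2 * s)) :=
    sub_pos.2 (rpow_lt_one_of_one_lt_of_neg one_lt_two (by linarith))
  refine ⟨π / 2 * 𝒦⁻¹ * (24 * 2 ^ (2 : ℝ) / (1 - 2 ^ (-(2 * s)))) * 2 ^ (-(2 * s)),
    by positivity, fun a r ha hr => ?_⟩
  have hexp : (-1 - 2 * s) - 1 = -(2 + 2 * s) := by ring
  have hdp : (2 : ℝ) - (2 + 2 * s) = -(2 * s) := by ring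
  calc _ ≤ ∫⁻ σ, ENNReal.ofReal (π / 2 * 𝒦⁻¹) * (Set.Ioi (2 * (a / r))).indicator
          (fun t => ENNReal.ofReal (t ^ (-(2 + 2 * s)))) (θ σ) ∂sphereMeasure :=
        lintegral_mono fun σ => hexp ▸ ofReal_ite_le_indicator_Ioi (div_pos ha hr).le
          (arccos_nonneg _) hb_nonneg fun t h0 h1 => (hb t h0 h1).2
    _ = ENNReal.ofReal (π / 2 * 𝒦⁻¹) * ∫⁻ σ, (Set.Ioi (2 * (a / r))).indicator
          (fun t => ENNReal.ofReal (t ^ (-(2 + 2 * s)))) (θ σ) ∂sphereMeasure :=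
        lintegral_const_mul' _ _ ENNReal.ofReal_ne_top
    _ ≤ ENNReal.ofReal (π / 2 * 𝒦⁻¹) * ENNReal.ofReal (24 * 2 ^ (2 : ℝ) /
          (1 - 2 ^ ((2 : ℝ) - (2 + 2 * s))) * (2 * (a / r)) ^ ((2 : ℝ) - (2 + 2 * s))) := by
        gcongr
        exact lintegral_indicator_Ioi_rpow_neg_le (by fun_prop) (by positivity) (by linarith)
          (by positivity) fun t ht => sphereMeasure_setOf_arccos_inner_le hu ht.le
    _ = _ := by
        rw [← ENNReal.ofReal_mul (by positivity), hdp, mul_rpow zero_le_two (by positivity),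
          div_rpow ha.le hr.le, rpow_neg hr.le]
        congr 1
        field_simp

/-- For a non-cutoff angular kernel `b` with
`𝒦 θ^{−1−2s} ≤ sin θ · b(cos θ) ≤ 𝒦⁻¹ θ^{−1−2s}` on `(0, π/2]`, `s ∈ (0,1)`,
there is `C(𝒦, s) > 0` such that for all `a, r > 0`:
`∫_{S²} b(cos θ(σ)) 1_{θ(σ) ≤ π/2} 1_{sin(θ(σ)/2) > a/r} dσ ≤ C(𝒦, s) a^{−2s} r^{2s}`,
where `θ(σ) = arccos(u·σ)`. -/
theorem angular_integral_large_dev (s 𝒦 : ℝ) (hs : 0 < s) (hs1 : s < 1)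
    (hK : 0 < 𝒦) (hK1 : 𝒦 ≤ 1) (b : ℝ → ℝ) (hb_meas : Measurable b)
    (hb_nonneg : ∀ x, 0 ≤ b x)
    (hb : ∀ θ : ℝ, 0 < θ → θ ≤ π / 2 →
      𝒦 * θ ^ (-1 - 2 * s) ≤ Real.sin θ * b (Real.cos θ) ∧
      Real.sin θ * b (Real.cos θ) ≤ 𝒦⁻¹ * θ ^ (-1 - 2 * s))
    (u : EuclideanSpace ℝ (Fin 3)) (hu : ‖u‖ = 1) :
    ∃ C : ℝ, 0 < C ∧ ∀ a r : ℝ, 0 < a → 0 < r →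
      (∫⁻ σ : Metric.sphere (0 : EuclideanSpace ℝ (Fin 3)) 1,
          ENNReal.ofReal
            (if Real.arccos ⟪u, (σ : EuclideanSpace ℝ (Fin 3))⟫ ≤ π / 2 ∧
                a / r < Real.sin (Real.arccos ⟪u, (σ : EuclideanSpace ℝ (Fin 3))⟫ / 2)
              then
              b (Real.cos (Real.arccos ⟪u, (σ : EuclideanSpace ℝ (Fin 3))⟫))
            else 0) ∂sphereMeasure)
        ≤ ENNReal.ofReal (C * a ^ (-(2 * s)) * r ^ (2 * s)) :=
  angular_integral_large_dev_general s 𝒦 hs hK b hb_nonneg hb u hu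
end
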